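/- Let m = 2^α with α ≠ 2 a nonnegative integer, α ≥ 1. Let A, B ⊆ ℤ/mℤ with A ∪ B = ℤ/mℤ and |A ∩ B| = 2. Then R_A(n) = R_B(n) for all n ∈ ℤ/mℤ if and only if B = A + m/2. -/

import Mathlib

/-- Number of unordered pairs (a, a') from A (possibly equal) with a + a' = n. -/
def Rf {m : ℕ} (A : Finset (ZMod m)) (n : ZMod m) : ℕ :=
  ((A ×ˢ A).filter (fun p => p.1 + p.2 = n ∧ p.1.val ≤ p.2.val)).card

/-- Number of ordered pairs (c, d) ∈ C × D with c + d = n. -/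
def Rord {m : ℕ} (C D : Finset (ZMod m)) (n : ZMod m) : ℕ :=
  ((C ×ˢ D).filter (fun p => p.1 + p.2 = n)).card

namespace Stmt6
variable {m : ℕ} [NeZero m]

set_option linter.unusedSectionVars false
set_option maxHeartbeats 1000000

def ind (A : Finset (ZMod m)) (x : ZMod m) : ℤ := if x ∈ A then 1 else 0

lemma rord_eq_sum (C D : Finset (ZMod m)) (n : ZMod m) :
    (Rord C D n : ℤ) = ∑ x : ZMod m, ind C x * ind D (n - x) := by
  have h1 : Rord C D n
      = (Finset.univ.filter (fun x : ZMod m => x ∈ C ∧ n - x ∈ D)).card := by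
    refine Finset.card_bij' (fun p _ => p.1) (fun x _ => (x, n - x)) ?_ ?_ ?_ ?_
    · intro p hp
      simp only [Finset.mem_filter, Finset.mem_product] at hp
      simp only [Finset.mem_filter, Finset.mem_univ, true_and]
      have h2 : n - p.1 = p.2 := by rw [← hp.2]; ring
      rw [h2]
      exact ⟨hp.1.1, hp.1.2⟩
    · intro x hx
      simp only [Finset.mem_filter, Finset.mem_univ, true_and] at hx
      simp only [Finset.mem_filter, Finset.mem_product]
      exact ⟨⟨hx.1, hx.2⟩, by ring⟩
    · intro p hp
      simp only [Finset.mem_filter, Finset.mem_product] at hp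
      have h2 : n - p.1 = p.2 := by rw [← hp.2]; ring
      simp [h2]
    · intro x hx; rfl
  rw [h1, Finset.card_filter]
  push_cast
  apply Finset.sum_congr rfl
  intro x _
  unfold ind
  split_ifs with h h1 h2 h3 <;> simp_all

lemma tcount_eq_sum (C : Finset (ZMod m)) (n : ZMod m) :
    ((C.filter (fun a => a + a = n)).card : ℤ)
      = ∑ x : ZMod m, if x + x = n then ind C x else 0 := by
  have h1 : (C.filter (fun a => a + a = n))
      = Finset.univ.filter (fun x : ZMod m => x + x = n ∧ x ∈ C) := by
    ext x; simp [and_comm]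
  rw [h1, Finset.card_filter]
  push_cast
  apply Finset.sum_congr rfl
  intro x _
  unfold ind
  split_ifs <;> simp_all

lemma two_rf (C : Finset (ZMod m)) (n : ZMod m) :
    2 * Rf C n = Rord C C n + (C.filter (fun a => a + a = n)).card := by
  classical
  have hRf : Rf C n = ((C ×ˢ C).filter (fun p => p.1 + p.2 = n ∧ p.1.val < p.2.val)).card
      + ((C ×ˢ C).filter (fun p => p.1 + p.2 = n ∧ p.1.val = p.2.val)).card := by
    unfold Rf
    rw [← Finset.card_union_of_disjoint]
    · congr 1
      ext p
      simp only [Finset.mem_union, Finset.mem_filter, Finset.mem_product]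
      constructor
      · rintro ⟨hp, hs, h⟩
        rcases lt_or_eq_of_le h with h' | h'
        · exact Or.inl ⟨hp, hs, h'⟩
        · exact Or.inr ⟨hp, hs, h'⟩
      · rintro (⟨hp, hs, h⟩ | ⟨hp, hs, h⟩)
        · exact ⟨hp, hs, le_of_lt h⟩
        · exact ⟨hp, hs, le_of_eq h⟩
    · rw [Finset.disjoint_left]
      intro p hp1 hp2
      simp only [Finset.mem_filter] at hp1 hp2
      omega
  have hneg : Rf C n
      + ((C ×ˢ C).filter (fun p => p.1 + p.2 = n ∧ ¬ p.1.val ≤ p.2.val)).card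
      = Rord C C n := by
    unfold Rf Rord
    rw [← Finset.filter_filter, ← Finset.filter_filter]
    exact Finset.card_filter_add_card_filter_not _
  have hswap : ((C ×ˢ C).filter (fun p => p.1 + p.2 = n ∧ ¬ p.1.val ≤ p.2.val)).card
      = ((C ×ˢ C).filter (fun p => p.1 + p.2 = n ∧ p.1.val < p.2.val)).card := by
    refine Finset.card_bij' (fun p _ => (p.2, p.1)) (fun p _ => (p.2, p.1)) ?_ ?_ ?_ ?_
    · intro p hp
      simp only [Finset.mem_filter, Finset.mem_product] at hp ⊢
      obtain ⟨⟨h1, h2⟩, h3, h4⟩ := hp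
      exact ⟨⟨h2, h1⟩, by rw [← h3]; ring, by omega⟩
    · intro p hp
      simp only [Finset.mem_filter, Finset.mem_product] at hp ⊢
      obtain ⟨⟨h1, h2⟩, h3, h4⟩ := hp
      exact ⟨⟨h2, h1⟩, by rw [← h3]; ring, by omega⟩
    · intro p _; rfl
    · intro p _; rfl
  have heq : ((C ×ˢ C).filter (fun p => p.1 + p.2 = n ∧ p.1.val = p.2.val)).card
      = (C.filter (fun a => a + a = n)).card := by
    refine Finset.card_bij' (fun p _ => p.1) (fun a _ => (a, a)) ?_ ?_ ?_ ?_
    · intro p hp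
      simp only [Finset.mem_filter, Finset.mem_product] at hp ⊢
      have h5 : p.1 = p.2 := ZMod.val_injective m hp.2.2
      exact ⟨hp.1.1, by rw [← hp.2.1, ← h5]⟩
    · intro a ha
      simp only [Finset.mem_filter, Finset.mem_product] at ha ⊢
      exact ⟨⟨ha.1, ha.1⟩, ha.2, trivial⟩
    · intro p hp
      simp only [Finset.mem_filter, Finset.mem_product] at hp
      have h5 : p.1 = p.2 := ZMod.val_injective m hp.2.2
      exact Prod.ext rfl h5
    · intro a _; rfl
  omega

def gg (A B : Finset (ZMod m)) (x : ZMod m) : ℤ := ind A x - ind B x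

lemma indAB (A B : Finset (ZMod m)) (c1 c2 : ZMod m) (hc : c1 ≠ c2)
    (hU : A ∪ B = Finset.univ) (hI : A ∩ B = {c1, c2}) (x : ZMod m) :
    ind A x + ind B x
      = 1 + ((if x = c1 then (1:ℤ) else 0) + (if x = c2 then (1:ℤ) else 0)) := by
  have hUx : x ∈ A ∪ B := by rw [hU]; exact Finset.mem_univ x
  rw [Finset.mem_union] at hUx
  have hIx : (x ∈ A ∧ x ∈ B) ↔ (x = c1 ∨ x = c2) := by
    constructor
    · intro h
      have : x ∈ A ∩ B := Finset.mem_inter.2 h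
      rw [hI] at this
      simpa using this
    · intro h
      have : x ∈ A ∩ B := by rw [hI]; simpa using h
      exact Finset.mem_inter.1 this
  unfold ind
  by_cases h1 : x ∈ A <;> by_cases h2 : x ∈ B <;> simp only [h1, h2, if_true, if_false]
  · have := hIx.1 ⟨h1, h2⟩
    rcases this with h | h
    · rw [if_pos h, if_neg (by rw [h]; exact hc)]; ring
    · rw [if_neg (by rw [h]; intro he; exact hc he.symm), if_pos h]; ring
  · have hx : ¬ (x = c1 ∨ x = c2) := fun h => h2 (hIx.2 h).2
    push_neg at hx
    rw [if_neg hx.1, if_neg hx.2]; ring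
  · have hx : ¬ (x = c1 ∨ x = c2) := fun h => h1 (hIx.2 h).1
    push_neg at hx
    rw [if_neg hx.1, if_neg hx.2]; ring
  · tauto

lemma master (A B : Finset (ZMod m)) (c1 c2 : ZMod m) (hc : c1 ≠ c2)
    (hU : A ∪ B = Finset.univ) (hI : A ∩ B = {c1, c2})
    (heq : ∀ n, Rf A n = Rf B n) (n : ZMod m) :
    (∑ x : ZMod m, gg A B x) + gg A B (n - c1) + gg A B (n - c2)
      + (∑ x : ZMod m, if x + x = n then gg A B x else 0) = 0 := by
  have hsymm : ∑ x : ZMod m, ind A x * ind B (n - x)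
      = ∑ x : ZMod m, ind B x * ind A (n - x) := by
    refine Finset.sum_nbij' (fun x => n - x) (fun x => n - x)
      (fun a _ => Finset.mem_univ _) (fun a _ => Finset.mem_univ _)
      (fun a _ => by ring) (fun a _ => by ring) ?_
    intro a _
    have h2 : n - (n - a) = a := by ring
    rw [h2]; ring
  have hnat : Rord A A n + (A.filter (fun a => a + a = n)).card
      = Rord B B n + (B.filter (fun a => a + a = n)).card := by
    have hA := two_rf A n
    have hB := two_rf B n
    have h := heq n
    omega
  have hcast : (∑ x : ZMod m, ind A x * ind A (n - x))
      + (∑ x : ZMod m, if x + x = n then ind A x else 0)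
      = (∑ x : ZMod m, ind B x * ind B (n - x))
      + (∑ x : ZMod m, if x + x = n then ind B x else 0) := by
    rw [← rord_eq_sum A A n, ← rord_eq_sum B B n, ← tcount_eq_sum A n, ← tcount_eq_sum B n]
    exact_mod_cast hnat
  have e1 : ∑ x : ZMod m, gg A B x * (ind A (n - x) + ind B (n - x))
      = ((∑ x : ZMod m, ind A x * ind A (n - x))
          - (∑ x : ZMod m, ind B x * ind B (n - x)))
        + ((∑ x : ZMod m, ind A x * ind B (n - x))
          - (∑ x : ZMod m, ind B x * ind A (n - x))) := by
    rw [← Finset.sum_sub_distrib, ← Finset.sum_sub_distrib, ← Finset.sum_add_distrib]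
    apply Finset.sum_congr rfl
    intro x _
    unfold gg; ring
  have e3 : ∑ x : ZMod m, gg A B x * (ind A (n - x) + ind B (n - x))
      = (∑ x : ZMod m, gg A B x) + (gg A B (n - c1) + gg A B (n - c2)) := by
    have hptw : ∀ x : ZMod m, gg A B x * (ind A (n - x) + ind B (n - x))
        = gg A B x + ((if x = n - c1 then gg A B x else 0)
          + (if x = n - c2 then gg A B x else 0)) := by
      intro x
      have hAB := indAB A B c1 c2 hc hU hI (n - x)
      rw [hAB]
      by_cases j1 : x = n - c1 <;> by_cases j2 : x = n - c2
      · have k1 : n - x = c1 := by rw [j1]; ring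
        have k2 : n - x = c2 := by rw [j2]; ring
        rw [if_pos k1, if_pos k2, if_pos j1, if_pos j2]; ring
      · have k1 : n - x = c1 := by rw [j1]; ring
        have k2 : n - x ≠ c2 := fun h => j2 (by rw [← h]; ring)
        rw [if_pos k1, if_neg k2, if_pos j1, if_neg j2]; ring
      · have k1 : n - x ≠ c1 := fun h => j1 (by rw [← h]; ring)
        have k2 : n - x = c2 := by rw [j2]; ring
        rw [if_neg k1, if_pos k2, if_neg j1, if_pos j2]; ring
      · have k1 : n - x ≠ c1 := fun h => j1 (by rw [← h]; ring)
        have k2 : n - x ≠ c2 := fun h => j2 (by rw [← h]; ring)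
        rw [if_neg k1, if_neg k2, if_neg j1, if_neg j2]; ring
    rw [Finset.sum_congr rfl (fun x _ => hptw x), Finset.sum_add_distrib,
      Finset.sum_add_distrib, Finset.sum_ite_eq' Finset.univ (n - c1),
      Finset.sum_ite_eq' Finset.univ (n - c2)]
    simp
  have e4 : (∑ x : ZMod m, if x + x = n then ind A x else 0)
      - (∑ x : ZMod m, if x + x = n then ind B x else 0)
      = ∑ x : ZMod m, if x + x = n then gg A B x else 0 := by
    rw [← Finset.sum_sub_distrib]
    apply Finset.sum_congr rfl
    intro x _
    by_cases h : x + x = n <;> simp [h, gg]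
  have e13 := e1.symm.trans e3
  rw [hsymm] at e13
  linarith [hcast, e13, e4]

def par {m : ℕ} (x : ZMod m) : ZMod 2 := (x.val : ZMod 2)

lemma par_eq {m : ℕ} [NeZero m] (h2m : (2:ℕ) ∣ m) (x : ZMod m) :
    par x = ZMod.castHom h2m (ZMod 2) x := by
  rw [ZMod.castHom_apply, ← ZMod.natCast_val]
  rfl

lemma par_add (h2m : (2:ℕ) ∣ m) (x y : ZMod m) : par (x + y) = par x + par y := by
  rw [par_eq h2m, par_eq h2m, par_eq h2m, map_add]

lemma par_sub (h2m : (2:ℕ) ∣ m) (x y : ZMod m) : par (x - y) = par x - par y := by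
  rw [par_eq h2m, par_eq h2m, par_eq h2m, map_sub]

lemma par_natCast (h2m : (2:ℕ) ∣ m) (k : ℕ) : par ((k : ℕ) : ZMod m) = (k : ZMod 2) := by
  rw [par_eq h2m, map_natCast]

lemma par_two_mul (h2m : (2:ℕ) ∣ m) (x : ZMod m) : par (2 * x) = 0 := by
  rw [two_mul, par_add h2m]
  have : ∀ t : ZMod 2, t + t = 0 := by decide
  exact this _

lemma val_natCast_eq (z : ZMod m) : ((z.val : ℕ) : ZMod m) = z :=
  ZMod.natCast_rightInverse z

lemma double_eq_zero_iff (hme : m % 2 = 0) (z : ZMod m) :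
    z + z = 0 ↔ z = 0 ∨ z = ((m / 2 : ℕ) : ZMod m) := by
  have hm0 : m ≠ 0 := NeZero.ne m
  constructor
  · intro h
    have hz : ((z.val + z.val : ℕ) : ZMod m) = 0 := by
      push_cast [val_natCast_eq]
      exact h
    rw [ZMod.natCast_eq_zero_iff] at hz
    have hlt := ZMod.val_lt z
    have : z.val + z.val = 0 ∨ z.val + z.val = m := by
      rcases hz with ⟨c, hcyc⟩
      rcases Nat.lt_or_ge c 2 with hc | hc
      · interval_cases c <;> omega
      · have : m * 2 ≤ m * c := Nat.mul_le_mul_left m hc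
        omega
    rcases this with h' | h'
    · left
      rw [← val_natCast_eq z]
      have : z.val = 0 := by omega
      rw [this]; simp
    · right
      rw [← val_natCast_eq z]
      have : z.val = m / 2 := by omega
      rw [this]
  · rintro (rfl | rfl)
    · simp
    · have : ((m/2 : ℕ) : ZMod m) + ((m/2 : ℕ) : ZMod m) = ((m/2 + m/2 : ℕ) : ZMod m) := by
        push_cast; ring
      rw [this]
      have h2 : m / 2 + m / 2 = m := by omega
      rw [h2]
      exact ZMod.natCast_self m

lemma hbar_ne_zero (hme : m % 2 = 0) (hm2 : 2 ≤ m) : ((m / 2 : ℕ) : ZMod m) ≠ 0 := by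
  rw [Ne, ZMod.natCast_eq_zero_iff]
  intro hdvd
  have := Nat.le_of_dvd (by omega) hdvd
  omega

lemma sigma_zero (A B : Finset (ZMod m)) (c1 c2 : ZMod m) (hc : c1 ≠ c2)
    (hU : A ∪ B = Finset.univ) (hI : A ∩ B = {c1, c2})
    (heq : ∀ n, Rf A n = Rf B n) :
    ∑ x : ZMod m, gg A B x = 0 := by
  have hsum : ∑ n : ZMod m, ((∑ x : ZMod m, gg A B x) + gg A B (n - c1) + gg A B (n - c2)
      + (∑ x : ZMod m, if x + x = n then gg A B x else 0)) = 0 := by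
    rw [Finset.sum_congr rfl (fun n _ => master A B c1 c2 hc hU hI heq n)]
    simp
  have h1 : ∀ c : ZMod m, ∑ n : ZMod m, gg A B (n - c) = ∑ x : ZMod m, gg A B x := by
    intro c
    refine Finset.sum_nbij' (fun n => n - c) (fun y => y + c)
      (fun a _ => Finset.mem_univ _) (fun a _ => Finset.mem_univ _)
      (fun a _ => by ring) (fun a _ => by ring) (fun a _ => rfl)
  have h2 : ∑ n : ZMod m, (∑ x : ZMod m, if x + x = n then gg A B x else 0)
      = ∑ x : ZMod m, gg A B x := by
    rw [Finset.sum_comm]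
    apply Finset.sum_congr rfl
    intro x _
    rw [Finset.sum_ite_eq Finset.univ (x + x) (fun _ => gg A B x)]
    simp
  have h3 : ∑ n : ZMod m, (∑ x : ZMod m, gg A B x) = (m : ℤ) * (∑ x : ZMod m, gg A B x) := by
    rw [Finset.sum_const, Finset.card_univ, ZMod.card]
    push_cast
    ring
  have hexp : ((m : ℤ) + 3) * (∑ x : ZMod m, gg A B x) = 0 := by
    have := hsum
    rw [Finset.sum_add_distrib, Finset.sum_add_distrib, Finset.sum_add_distrib,
      h1 c1, h1 c2, h2, h3] at this
    linarith
  have hm : (0:ℤ) < (m:ℤ) + 3 := by positivity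
  rcases mul_eq_zero.1 hexp with h | h
  · linarith
  · exact h

lemma sum_ite_two (f : ZMod m → ℤ) (p q : ZMod m) (hpq : p ≠ q) :
    ∑ x : ZMod m, (if x = p ∨ x = q then f x else 0) = f p + f q := by
  have hptw : ∀ x : ZMod m, (if x = p ∨ x = q then f x else 0)
      = (if x = p then f x else 0) + (if x = q then f x else 0) := by
    intro x
    by_cases h1 : x = p <;> by_cases h2 : x = q
    · exact absurd (by rw [← h1, h2]) hpq
    · rw [if_pos (Or.inl h1), if_pos h1, if_neg h2]; ring
    · rw [if_pos (Or.inr h2), if_neg h1, if_pos h2]; ring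
    · rw [if_neg (by tauto), if_neg h1, if_neg h2]; ring
  rw [Finset.sum_congr rfl (fun x _ => hptw x), Finset.sum_add_distrib,
    Finset.sum_ite_eq' Finset.univ p f, Finset.sum_ite_eq' Finset.univ q f]
  simp

lemma gval (A B : Finset (ZMod m)) (c1 c2 : ZMod m) (hc : c1 ≠ c2)
    (hU : A ∪ B = Finset.univ) (hI : A ∩ B = {c1, c2}) (x : ZMod m) :
    (gg A B x = 0 ↔ (x = c1 ∨ x = c2))
      ∧ (gg A B x = 0 ∨ gg A B x = 1 ∨ gg A B x = -1) := by
  have h := indAB A B c1 c2 hc hU hI x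
  unfold gg ind at h ⊢
  by_cases h1 : x = c1 <;> by_cases h2 : x = c2 <;>
    simp only [h1, h2, if_true, if_false, eq_self_iff_true, or_true, true_or, iff_true] <;>
    split_ifs at h ⊢ <;> simp_all <;> omega

lemma relations (hme : m % 2 = 0) (A B : Finset (ZMod m)) (c1 c2 : ZMod m) (hc : c1 ≠ c2)
    (hU : A ∪ B = Finset.univ) (hI : A ∩ B = {c1, c2})
    (heq : ∀ n, Rf A n = Rf B n) :
    (∀ n : ZMod m, par n = 1 →
        gg A B (n + c1) + gg A B ((n - (c2 - c1)) + c1) = 0)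
    ∧ (∀ k : ZMod m,
        gg A B ((2*k) + c1) + gg A B ((2*k - (c2 - c1)) + c1) + gg A B (k + c1)
          + gg A B ((k + ((m/2 : ℕ) : ZMod m)) + c1) = 0) := by
  have h2m : (2:ℕ) ∣ m := Nat.dvd_of_mod_eq_zero hme
  have hm2 : 2 ≤ m := by
    have := Nat.pos_of_ne_zero (NeZero.ne m)
    omega
  have hσ := sigma_zero A B c1 c2 hc hU hI heq
  have M0 : ∀ n : ZMod m, gg A B (n - c1) + gg A B (n - c2)
      + (∑ x : ZMod m, if x + x = n then gg A B x else 0) = 0 := by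
    intro n
    have := master A B c1 c2 hc hU hI heq n
    rw [hσ] at this
    linarith
  constructor
  · intro n hn
    have hM := M0 (n + 2 * c1)
    have hT : (∑ x : ZMod m, if x + x = n + 2*c1 then gg A B x else 0) = 0 := by
      apply Finset.sum_eq_zero
      intro x _
      rw [if_neg]
      intro hx
      have hp : par (x + x) = par (n + 2*c1) := by rw [hx]
      rw [← two_mul, par_two_mul h2m, par_add h2m, par_two_mul h2m, hn] at hp
      simp at hp
    rw [hT] at hM
    have e1 : n + 2*c1 - c1 = n + c1 := by ring
    have e2 : n + 2*c1 - c2 = (n - (c2 - c1)) + c1 := by ring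
    rw [e1, e2] at hM
    linarith
  · intro k
    have hM := M0 (2*(k + c1))
    have hT : (∑ x : ZMod m, if x + x = 2*(k + c1) then gg A B x else 0)
        = gg A B (k + c1) + gg A B ((k + c1) + ((m/2 : ℕ) : ZMod m)) := by
      have hcond : ∀ x : ZMod m, (x + x = 2*(k + c1))
          ↔ (x = k + c1 ∨ x = (k + c1) + ((m/2 : ℕ) : ZMod m)) := by
        intro x
        constructor
        · intro hx
          have hz : (x - (k + c1)) + (x - (k + c1)) = 0 := by
            rw [sub_add_sub_comm, hx]; ring
          rcases (double_eq_zero_iff hme _).1 hz with h | h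
          · left; have := sub_eq_zero.1 h; exact this
          · right
            have : x = (x - (k + c1)) + (k + c1) := by ring
            rw [this, h]; ring
        · have hhh : ((m/2:ℕ):ZMod m) + ((m/2:ℕ):ZMod m) = 0 :=
            (double_eq_zero_iff hme _).2 (Or.inr rfl)
          rintro (rfl | rfl)
          · ring
          · linear_combination hhh
      have hc2 : (∑ x : ZMod m, if x + x = 2*(k + c1) then gg A B x else 0)
          = ∑ x : ZMod m, if x = k + c1 ∨ x = (k + c1) + ((m/2 : ℕ) : ZMod m)
              then gg A B x else 0 :=
        Finset.sum_congr rfl (fun x _ => by simp only [hcond x])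
      rw [hc2]
      apply sum_ite_two
      intro hcontra
      have hzero : ((m/2 : ℕ) : ZMod m) = 0 := by
        calc ((m/2 : ℕ) : ZMod m) = (k + c1) + ((m/2:ℕ):ZMod m) - (k + c1) := by ring
        _ = (k + c1) - (k + c1) := by rw [← hcontra]
        _ = 0 := by ring
      exact hbar_ne_zero hme hm2 hzero
    rw [hT] at hM
    have e1 : 2*(k + c1) - c1 = 2*k + c1 := by ring
    have e2 : 2*(k + c1) - c2 = (2*k - (c2 - c1)) + c1 := by ring
    have e3 : (k + c1) + ((m/2:ℕ):ZMod m) = (k + ((m/2:ℕ):ZMod m)) + c1 := by ring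
    rw [e1, e2, e3] at hM
    linarith

lemma par_zero' : par (0 : ZMod m) = 0 := by
  unfold par
  rw [ZMod.val_zero]
  simp

lemma par_val (z : ZMod m) : par z = ((z.val : ℕ) : ZMod 2) := rfl


lemma natCast_zmod2_one {n : ℕ} (h : n % 2 = 1) : ((n:ℕ) : ZMod 2) = 1 := by
  conv_lhs => rw [← Nat.mod_add_div n 2]
  push_cast [h]
  rw [show ((2:ZMod 2)) = 0 from rfl]
  ring

lemma natCast_zmod2_zero {n : ℕ} (h : n % 2 = 0) : ((n:ℕ) : ZMod 2) = 0 := by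
  conv_lhs => rw [← Nat.mod_add_div n 2]
  push_cast [h]
  rw [show ((2:ZMod 2)) = 0 from rfl]
  ring

theorem key (α : ℕ) (hα : 3 ≤ α) (hm : m = 2 ^ α)
    (G : ZMod m → ℤ) (d : ZMod m) (hd0 : d ≠ 0)
    (hzero : ∀ x : ZMod m, G x = 0 ↔ (x = 0 ∨ x = d))
    (hpm : ∀ x : ZMod m, G x = 0 ∨ G x = 1 ∨ G x = -1)
    (R1 : ∀ n : ZMod m, par n = 1 → G n + G (n - d) = 0)
    (R2 : ∀ k : ZMod m, G (2*k) + G (2*k - d) + G k + G (k + ((m/2 : ℕ) : ZMod m)) = 0) :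
    d = ((m/2 : ℕ) : ZMod m) := by
  have hm8 : 8 ≤ m := by
    rw [hm]
    calc (8:ℕ) = 2^3 := rfl
    _ ≤ 2^α := Nat.pow_le_pow_right (by norm_num) hα
  have h2m : (2:ℕ) ∣ m := by
    rw [hm]
    exact dvd_pow_self 2 (by omega)
  have hme : m % 2 = 0 := Nat.mod_eq_zero_of_dvd h2m
  have hm2 : 2 ≤ m := by omega
  -- abbreviation H
  set H : ZMod m := ((m/2 : ℕ) : ZMod m) with hHdef
  have hHH : H + H = 0 := (double_eq_zero_iff hme H).2 (Or.inr rfl)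
  have hH0 : H ≠ 0 := by
    rw [hHdef, Ne, ZMod.natCast_eq_zero_iff]
    intro hdvd
    have := Nat.le_of_dvd (by omega) hdvd
    omega
  have hm2div : m / 2 = 2^(α-1) := by
    have : m = 2 * 2^(α-1) := by
      rw [hm, ← pow_succ']
      congr 1
      omega
    omega
  have parH : par H = 0 := by
    rw [hHdef, par_natCast h2m, hm2div]
    have : (2:ℕ)^(α-1) = 2 * 2^(α-2) := by
      rw [← pow_succ']
      congr 1
      omega
    rw [this]
    push_cast
    rw [show ((2:ZMod 2)) = 0 from rfl]
    ring
  have pard' : par d = (d.val : ZMod 2) := rfl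
  haveI hF1 : Fact (1 < m) := ⟨by omega⟩
  have par1 : par (1 : ZMod m) = 1 := by
    rw [par_val, ZMod.val_one]
    simp
  -- G is ±1 off {0, d}
  have hGpm : ∀ x : ZMod m, x ≠ 0 → x ≠ d → (G x = 1 ∨ G x = -1) := by
    intro x hx0 hxd
    rcases hpm x with h | h | h
    · rcases (hzero x).1 h with h' | h' <;> [exact absurd h' hx0; exact absurd h' hxd]
    · exact Or.inl h
    · exact Or.inr h
  have hG0 : G 0 = 0 := (hzero 0).2 (Or.inl rfl)
  have hGd : G d = 0 := (hzero d).2 (Or.inr rfl)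
  -- case on parity of d
  rcases Nat.even_or_odd d.val with hDeven | hDodd
  · -- d even case
    have pard : par d = 0 := by
      rw [pard']
      obtain ⟨t, ht⟩ := hDeven
      rw [ht]
      push_cast
      have haa : ∀ a : ZMod 2, a + a = 0 := by decide
      exact haa _
    -- 2-adic decomposition of D
    obtain ⟨D, hDdef⟩ : ∃ D, D = d.val := ⟨d.val, rfl⟩
    have hdD : ((D:ℕ) : ZMod m) = d := by rw [hDdef, val_natCast_eq]
    have hD0 : D ≠ 0 := by
      intro h
      apply hd0
      rw [← hdD, h]
      simp
    have hDlt : D < m := by rw [hDdef]; exact ZMod.val_lt d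
    have h2D : (2:ℕ) ∣ D := by
      rcases hDeven with ⟨t, ht⟩
      exact ⟨t, by omega⟩
    obtain ⟨v, u, hDvu, hu_odd⟩ : ∃ v u, D = 2^v * u ∧ ¬ (2:ℕ) ∣ u :=
      ⟨D.factorization 2, D / 2^(D.factorization 2),
        (Nat.ordProj_mul_ordCompl_eq_self D 2).symm,
        Nat.not_dvd_ordCompl (by norm_num) hD0⟩
    have hu0 : u ≠ 0 := by
      intro h
      rw [h, Nat.mul_zero] at hDvu
      exact hD0 hDvu
    have hv1 : 1 ≤ v := by
      rcases Nat.eq_zero_or_pos v with h | h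
      · exfalso
        rw [h, pow_zero, one_mul] at hDvu
        rw [← hDvu] at hu_odd
        exact hu_odd h2D
      · exact h
    have hvlt : v < α := by
      have h1 : (2:ℕ)^v ≤ D := by
        rw [hDvu]
        have : 1 ≤ u := Nat.pos_of_ne_zero hu0
        calc (2:ℕ)^v = 2^v * 1 := by ring
        _ ≤ 2^v * u := Nat.mul_le_mul_left _ this
      have h2 : (2:ℕ)^v < 2^α := by omega
      exact (Nat.pow_lt_pow_iff_right (by norm_num)).1 h2
    rcases Nat.lt_or_ge v (α-1) with hvsmall | hvbig
    swap
    · -- v = α - 1 : conclude d = H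
      have hveq : v = α - 1 := by omega
      have hu1 : u = 1 := by
        have hsp : (2:ℕ)^α = 2^(α-1) * 2 := by
          rw [← pow_succ]
          congr 1
          omega
        have h1 : (2:ℕ)^(α-1) * u < 2^(α-1) * 2 := by
          rw [← hsp, ← hveq, ← hDvu, ← hm]
          exact hDlt
        have h3 : u < 2 := lt_of_mul_lt_mul_left h1 (Nat.zero_le _)
        omega
      have hDm2 : D = m / 2 := by
        rw [hDvu, hu1, hveq, hm2div]
        ring
      rw [hHdef, ← hDm2, hdD]
    · -- v ≤ α - 2 : contradiction
      exfalso
      have hvle : v ≤ α - 2 := by omega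
      have hcu : Nat.Coprime u m := by
        rw [hm]
        apply Nat.Coprime.pow_right
        exact ((Nat.Prime.coprime_iff_not_dvd Nat.prime_two).2 hu_odd).symm
      have hu2 : u % 2 = 1 := Nat.odd_iff.1 (Nat.odd_iff.2 (by omega))
      have F1 : ∀ x : ZMod m, par x = 1 → G (x + d) = - G x := by
        intro x hx
        have hpar : par (x + d) = 1 := by
          rw [par_add h2m, hx, pard]
          decide
        have hr := R1 (x + d) hpar
        have e : x + d - d = x := by ring
        rw [e] at hr
        linarith
      have Fc : ∀ c : ℕ, ∀ x : ZMod m, par x = 1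
          → G (x + ((2*c : ℕ) : ZMod m) * d) = G x := by
        intro c
        induction c with
        | zero => intro x hx; simp
        | succ c ih =>
          intro x hx
          have hpar2cd : par (((2*c:ℕ):ZMod m)*d) = 0 := by
            have e : ((2*c:ℕ):ZMod m)*d = 2*(((c:ℕ):ZMod m)*d) := by push_cast; ring
            rw [e, par_two_mul h2m]
          have hp2 : par (x + ((2*c:ℕ):ZMod m)*d) = 1 := by
            rw [par_add h2m, hx, hpar2cd]
            decide
          have h1 := F1 _ hp2
          have hp3 : par (x + ((2*c:ℕ):ZMod m)*d + d) = 1 := by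
            rw [par_add h2m, hp2, pard]
            decide
          have h2 := F1 _ hp3
          have e : x + ((2*(c+1):ℕ):ZMod m)*d = x + ((2*c:ℕ):ZMod m)*d + d + d := by
            push_cast; ring
          rw [e, h2, h1, ih x hx]
          ring
      obtain ⟨w, hw⟩ : ∃ w, α = v + 2 + w := ⟨α - (v+2), by omega⟩
      obtain ⟨u', hu'⟩ : ∃ u', u' = (((u:ℕ) : ZMod m)⁻¹).val := ⟨_, rfl⟩
      have hUU : ((u:ℕ) : ZMod m) * ((u':ℕ) : ZMod m) = 1 := by
        rw [hu', val_natCast_eq]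
        exact ZMod.coe_mul_inv_eq_one u hcu
      have hH2 : H = (2:ZMod m)^(v+1+w) := by
        have hα1 : α - 1 = v+1+w := by omega
        rw [hHdef, hm2div, hα1]
        push_cast
        ring
      have hdcast : d = (2:ZMod m)^v * ((u:ℕ):ZMod m) := by
        rw [← hdD, hDvu]
        push_cast
        ring
      have hHd : ((2 * (2^w * u') : ℕ) : ZMod m) * d = H := by
        rw [hdcast, hH2]
        push_cast
        calc (2 * (2^w * (u':ZMod m))) * ((2:ZMod m)^v * ((u:ℕ):ZMod m))
            = (2:ZMod m)^(v+1+w) * (((u:ℕ):ZMod m) * ((u':ℕ):ZMod m)) := by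
              ring
        _ = (2:ZMod m)^(v+1+w) := by rw [hUU]; ring
      have F2 : ∀ k : ZMod m, par k = 1 → G (2*k) = -G k ∧ G (2*k - d) = -G k := by
        intro k hk
        have hR := R2 k
        have hkH : G (k + H) = G k := by
          have hfc := Fc (2^w * u') k hk
          rw [hHd] at hfc
          exact hfc
        rw [hkH] at hR
        have hk0' : k ≠ 0 := by
          intro h; rw [h, par_zero'] at hk; exact absurd hk (by decide)
        have hkd' : k ≠ d := by
          intro h; rw [h, pard] at hk; exact absurd hk (by decide)
        have hk1 := hGpm k hk0' hkd'
        have h2k := hpm (2*k)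
        have h2kd := hpm (2*k - d)
        rcases hk1 with h | h <;> rcases h2k with h2 | h2 | h2 <;>
          rcases h2kd with h3 | h3 | h3 <;> refine ⟨by omega, by omega⟩
      obtain ⟨e, he⟩ : ∃ e, v = 1 + e := ⟨v - 1, by omega⟩
      obtain ⟨δ, hδ⟩ : ∃ δ : ZMod m, δ = ((2^e * u : ℕ) : ZMod m) := ⟨_, rfl⟩
      have hδ2 : 2 * δ = d := by
        rw [hδ, ← hdD, hDvu, he]
        push_cast
        ring
      rcases Nat.eq_zero_or_pos e with he0 | he1
      · -- v = 1, δ odd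
        have parδ : par δ = 1 := by
          rw [hδ, par_natCast h2m, he0]
          simpa using natCast_zmod2_one hu2
        have hF2δ := (F2 δ parδ).1
        rw [hδ2, hGd] at hF2δ
        have hGδ : G δ = 0 := by linarith
        rcases (hzero δ).1 hGδ with h | h
        · rw [h, par_zero'] at parδ; exact absurd parδ (by decide)
        · rw [h, pard] at parδ; exact absurd parδ (by decide)
      · -- v ≥ 2, δ even
        have parδ : par δ = 0 := by
          rw [hδ, par_natCast h2m]
          apply natCast_zmod2_zero
          obtain ⟨e', he'⟩ : ∃ e', e = 1 + e' := ⟨e - 1, by omega⟩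
          have hrw : 2^e * u = 2 * (2^e' * u) := by rw [he']; ring
          rw [hrw]
          omega
        have hstep : ∀ k : ZMod m, par k = 1 → G (k + δ) = G k := by
          intro k hk
          have h1 := (F2 k hk).1
          have parkδ : par (k + δ) = 1 := by
            rw [par_add h2m, hk, parδ]
            decide
          have h2 := (F2 (k+δ) parkδ).2
          have e2 : 2*(k+δ) - d = 2*k := by rw [← hδ2]; ring
          rw [e2, h1] at h2
          linarith
        have hA := hstep 1 par1
        have par1δ : par (1 + δ) = 1 := by
          rw [par_add h2m, par1, parδ]
          decide
        have hB := hstep (1+δ) par1δ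
        have e3 : 1 + δ + δ = 1 + d := by rw [← hδ2]; ring
        rw [e3] at hB
        have hC := F1 1 par1
        have hG1 : G 1 = 0 := by linarith
        rcases (hzero 1).1 hG1 with h | h
        · rw [h, par_zero'] at par1; exact absurd par1 (by decide)
        · rw [h, pard] at par1; exact absurd par1 (by decide)
  · -- d odd case: contradiction
    exfalso
    obtain ⟨D, hDdef⟩ : ∃ D, D = d.val := ⟨d.val, rfl⟩
    have hdD : ((D:ℕ) : ZMod m) = d := by rw [hDdef, val_natCast_eq]
    have hDodd' : D % 2 = 1 := by rw [hDdef]; exact Nat.odd_iff.1 hDodd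
    have pard : par d = 1 := by
      rw [pard']
      rw [← hDdef]
      exact natCast_zmod2_one hDodd'
    have p2 : ∀ y : ZMod m, par (2*y) = 0 := fun y => par_two_mul h2m y
    have p4 : ∀ y : ZMod m, par (4*y) = 0 := by
      intro y
      rw [show (4:ZMod m)*y = 2*(2*y) from by ring]
      exact par_two_mul h2m _
    have p8 : ∀ y : ZMod m, par (8*y) = 0 := by
      intro y
      rw [show (8:ZMod m)*y = 2*(4*y) from by ring]
      exact par_two_mul h2m _
    -- step relation on class 2 mod 4
    have P : ∀ y : ZMod m, G (4*y + 2*d) = G (4*y - 2*d) := by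
      intro y
      have hEq1 := R2 (2*y)
      rw [show (2:ZMod m)*(2*y) = 4*y from by ring] at hEq1
      have h1 := R1 (4*y - d) (by rw [par_sub h2m, p4, pard]; decide)
      rw [show 4*y - d - d = 4*y - 2*d from by ring] at h1
      have hEq2 := R2 (2*y + d)
      rw [show (2:ZMod m)*(2*y + d) = 4*y + 2*d from by ring] at hEq2
      rw [show 4*y + 2*d - d = 4*y + d from by ring] at hEq2
      have h2 := R1 (4*y + d) (by rw [par_add h2m, p4, pard]; decide)
      rw [show 4*y + d - d = 4*y from by ring] at h2
      have h3 := R1 (2*y + d) (by rw [par_add h2m, p2, pard]; decide)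
      rw [show 2*y + d - d = 2*y from by ring] at h3
      have h4 := R1 (2*y + d + H) (by
        rw [par_add h2m, par_add h2m, p2, pard, parH]; decide)
      rw [show 2*y + d + H - d = 2*y + H from by ring] at h4
      linarith
    -- constancy on class 2 mod 4
    have fiter : ∀ c : ℕ, G (4*(((c:ℕ):ZMod m)*d) + 2*d) = G (2*d) := by
      intro c
      induction c with
      | zero =>
        rw [show 4*(((0:ℕ):ZMod m)*d) + 2*d = 2*d from by push_cast; ring]
      | succ c ih =>
        have hp := P (((c+1:ℕ):ZMod m)*d)
        rw [show 4*(((c+1:ℕ):ZMod m)*d) - 2*d = 4*(((c:ℕ):ZMod m)*d) + 2*d from by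
          push_cast; ring] at hp
        rw [hp, ih]
    have hud : IsUnit d := by
      rw [← hdD, ZMod.isUnit_iff_coprime, hm]
      apply Nat.Coprime.pow_right
      exact ((Nat.Prime.coprime_iff_not_dvd Nat.prime_two).2 (by omega)).symm
    have W : ∀ y : ZMod m, G (4*y + 2*d) = G (2*d) := by
      intro y
      obtain ⟨dw, hdw⟩ := hud
      obtain ⟨z, hz⟩ : ∃ z : ZMod m, z * d = y :=
        ⟨y * ↑dw⁻¹, by rw [← hdw, mul_assoc, Units.inv_mul, mul_one]⟩
      have := fiter z.val
      rw [val_natCast_eq, hz] at this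
      exact this
    -- G(2d) = ±1
    have h2d0 : 2*d ≠ 0 := by
      intro h
      rw [two_mul] at h
      rcases (double_eq_zero_iff hme d).1 h with h' | h'
      · exact hd0 h'
      · rw [h', parH] at pard
        exact absurd pard (by decide)
    have h2dd : 2*d ≠ d := by
      intro h
      apply hd0
      have : d = 2*d - d := by ring
      rw [h] at this
      rw [this]
      ring
    have hε := hGpm (2*d) h2d0 h2dd
    -- value on class 4 mod 8
    have class4 : ∀ y : ZMod m, G (8*y + 4*d) = - G (2*d) := by
      intro y
      have hk := R2 (4*y + 2*d)
      rw [show (2:ZMod m)*(4*y+2*d) = 8*y + 4*d from by ring] at hk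
      have hGk : G (4*y + 2*d) = G (2*d) := W y
      have hH4 : H = 4 * ((m/8 : ℕ) : ZMod m) := by
        have hm8div : m/8 = 2^(α-3) := by
          have : m = 8 * 2^(α-3) := by
            rw [hm, show α = 3 + (α-3) from by omega, pow_add]
            norm_num
          omega
        have e : α - 1 = (α-3) + 2 := by omega
        rw [hHdef, hm2div, hm8div, e]
        push_cast
        rw [pow_add]
        ring
      have hGkH : G (4*y + 2*d + H) = G (2*d) := by
        have e : 4*y + 2*d + H = 4*(y + ((m/8:ℕ):ZMod m)) + 2*d := by
          rw [hH4]; ring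
        rw [e]
        exact W _
      have h5 := R1 (8*y + 4*d - d) (by
        rw [par_sub h2m, par_add h2m, p8,
          show (4:ZMod m)*d = 2*(2*d) from by ring, par_two_mul h2m, pard]; decide)
      rw [show 8*y + 4*d - d - d = 4*(2*y) + 2*d from by ring] at h5
      have h6 : G (4*(2*y) + 2*d) = G (2*d) := W (2*y)
      linarith
    -- G(H) = G(2d)
    have hGH : G H = G (2*d) := by
      have hk := R2 d
      rw [show (2:ZMod m)*d - d = d from by ring] at hk
      rw [hGd] at hk
      have h7 := R1 (d + H) (by rw [par_add h2m, pard, parH]; decide)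
      rw [show d + H - d = H from by ring] at h7
      linarith
    rcases Nat.lt_or_ge α 4 with hα3 | hα4
    · -- α = 3
      have hα3' : α = 3 := by omega
      have hm8' : m = 8 := by rw [hm, hα3']; norm_num
      have h4d : 4 * d = H := by
        rw [← hdD, show (4:ZMod m) * ((D:ℕ):ZMod m) = ((4*D : ℕ) : ZMod m) from by
          push_cast; ring]
        rw [← ZMod.natCast_mod (4*D) m]
        have hD4 : (4*D) % m = 4 := by
          rw [hm8']
          omega
        rw [hD4, hHdef, hm8']
      have hc := class4 0
      rw [show 8*(0:ZMod m) + 4*d = 4*d from by ring, h4d, hGH] at hc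
      rcases hε with h | h <;> omega
    · -- α ≥ 4
      have hk := R2 (4*d)
      rw [show (2:ZMod m)*(4*d) = 8*d from by ring] at hk
      have hG4d : G (4*d) = - G (2*d) := by
        have := class4 0
        rw [show 8*(0:ZMod m) + 4*d = 4*d from by ring] at this
        exact this
      have hH8 : H = 8 * ((m/16 : ℕ) : ZMod m) := by
        have hm16div : m/16 = 2^(α-4) := by
          have : m = 16 * 2^(α-4) := by
            rw [hm, show α = 4 + (α-4) from by omega, pow_add]
            norm_num
          omega
        have e : α - 1 = (α-4) + 3 := by omega
        rw [hHdef, hm2div, hm16div, e]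
        push_cast
        rw [pow_add]
        ring
      have hG4dH : G (4*d + H) = - G (2*d) := by
        have := class4 ((m/16 : ℕ) : ZMod m)
        rw [show 8*(((m/16:ℕ)):ZMod m) + 4*d = 4*d + H from by rw [hH8]; ring] at this
        exact this
      have h8 := R1 (8*d - d) (by
        rw [par_sub h2m, p8, pard]; decide)
      rw [show 8*d - d - d = 4*d + 2*d from by ring] at h8
      have h9 : G (4*d + 2*d) = G (2*d) := W d
      have h10 := hpm (8*d)
      rcases hε with h | h <;> rcases h10 with h' | h' | h' <;> omega

theorem antiper (α : ℕ) (hm : m = 2 ^ α) (hme : m % 2 = 0)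
    (G : ZMod m → ℤ)
    (R2 : ∀ k : ZMod m, G (2*k) + G (2*k - ((m/2:ℕ):ZMod m)) + G k
      + G (k + ((m/2:ℕ):ZMod m)) = 0) :
    ∀ x : ZMod m, G x + G (x + ((m/2:ℕ):ZMod m)) = 0 := by
  set H : ZMod m := ((m/2 : ℕ) : ZMod m) with hHdef
  have hHH : H + H = 0 := (double_eq_zero_iff hme H).2 (Or.inr rfl)
  have hsub : ∀ a : ZMod m, a - H = a + H := by
    intro a
    linear_combination -hHH
  have step : ∀ k : ZMod m, G (2*k) + G (2*k + H) = -(G k + G (k + H)) := by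
    intro k
    have := R2 k
    rw [hsub] at this
    linarith
  have iter : ∀ j : ℕ, ∀ k : ZMod m,
      G k + G (k + H) = (-1:ℤ)^j * (G ((2^j : ZMod m)*k) + G ((2^j:ZMod m)*k + H)) := by
    intro j
    induction j with
    | zero => intro k; simp
    | succ j ih =>
      intro k
      have h1 := ih k
      have h2 := step ((2^j : ZMod m)*k)
      rw [show (2:ZMod m)*((2^j:ZMod m)*k) = (2^(j+1):ZMod m)*k from by ring] at h2
      rw [h1, pow_succ]
      rw [h2]
      ring
  intro x
  have h0 : G 0 + G (0 + H) = 0 := by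
    have := step 0
    rw [show (2:ZMod m)*0 = (0:ZMod m) from by ring] at this
    linarith
  have hit := iter α x
  have hcast : ((2:ZMod m)^α) = 0 := by
    have e : (2:ZMod m)^α = ((2^α : ℕ) : ZMod m) := by push_cast; ring
    rw [e, ← hm, ZMod.natCast_self]
  rw [hcast, show (0:ZMod m)*x = 0 from by ring, h0] at hit
  rw [hit]
  ring

theorem easy_dir (hme : m % 2 = 0) (A : Finset (ZMod m)) (n : ZMod m) :
    Rf (A.image (fun a => a + ((m/2:ℕ):ZMod m))) n = Rf A n := by
  set H : ZMod m := ((m/2 : ℕ) : ZMod m) with hHdef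
  have hHH : H + H = 0 := (double_eq_zero_iff hme H).2 (Or.inr rfl)
  set B := A.image (fun a => a + H) with hBdef
  have hmem : ∀ x : ZMod m, x ∈ B ↔ x + H ∈ A := by
    intro x
    rw [hBdef, Finset.mem_image]
    constructor
    · rintro ⟨a, ha, rfl⟩
      have : a + H + H = a := by linear_combination hHH
      rw [this]
      exact ha
    · intro h
      exact ⟨x + H, h, by linear_combination hHH⟩
  have hord : Rord B B n = Rord A A n := by
    unfold Rord
    refine Finset.card_bij' (fun p _ => (p.1 + H, p.2 + H)) (fun p _ => (p.1 + H, p.2 + H))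
      ?_ ?_ ?_ ?_
    · intro p hp
      simp only [Finset.mem_filter, Finset.mem_product] at hp ⊢
      obtain ⟨⟨h1, h2⟩, h3⟩ := hp
      refine ⟨⟨(hmem p.1).1 h1, (hmem p.2).1 h2⟩, ?_⟩
      rw [← h3]; linear_combination hHH
    · intro p hp
      simp only [Finset.mem_filter, Finset.mem_product] at hp ⊢
      obtain ⟨⟨h1, h2⟩, h3⟩ := hp
      have e1 : p.1 + H + H = p.1 := by linear_combination hHH
      have e2 : p.2 + H + H = p.2 := by linear_combination hHH
      refine ⟨⟨(hmem _).2 (by rw [e1]; exact h1), (hmem _).2 (by rw [e2]; exact h2)⟩, ?_⟩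
      rw [← h3]; linear_combination hHH
    · intro p _
      have e1 : p.1 + H + H = p.1 := by linear_combination hHH
      have e2 : p.2 + H + H = p.2 := by linear_combination hHH
      exact Prod.ext e1 e2
    · intro p _
      have e1 : p.1 + H + H = p.1 := by linear_combination hHH
      have e2 : p.2 + H + H = p.2 := by linear_combination hHH
      exact Prod.ext e1 e2
  have ht : (B.filter (fun a => a + a = n)).card = (A.filter (fun a => a + a = n)).card := by
    refine Finset.card_bij' (fun a _ => a + H) (fun a _ => a + H) ?_ ?_ ?_ ?_
    · intro a ha
      simp only [Finset.mem_filter] at ha ⊢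
      exact ⟨(hmem a).1 ha.1, by rw [← ha.2]; linear_combination hHH⟩
    · intro a ha
      simp only [Finset.mem_filter] at ha ⊢
      have e1 : a + H + H = a := by linear_combination hHH
      exact ⟨(hmem _).2 (by rw [e1]; exact ha.1), by rw [← ha.2]; linear_combination hHH⟩
    · intro a _; linear_combination hHH
    · intro a _; linear_combination hHH
  have hA := two_rf A n
  have hB := two_rf B n
  omega

end Stmt6

/-- Characteristic function of A applied to the residue class of an integer. -/
def chi {m : ℕ} (A : Finset (ZMod m)) (k : ℤ) : ℤ :=
  if (k : ZMod m) ∈ A then 1 else 0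

open Stmt6 in
theorem stmt6 (α : ℕ) (hα2 : α ≠ 2) (hα1 : 1 ≤ α) (m : ℕ) (hm : m = 2 ^ α)
    [NeZero m] (A B : Finset (ZMod m))
    (hU : A ∪ B = Finset.univ) (hI : (A ∩ B).card = 2) :
    (∀ n : ZMod m, Rf A n = Rf B n) ↔
      B = A.image (fun a => a + ((m / 2 : ℕ) : ZMod m)) := by
  have hme : m % 2 = 0 := by
    have h2 : (2:ℕ) ∣ m := by rw [hm]; exact dvd_pow_self 2 (by omega)
    omega
  rcases Nat.lt_or_ge α 2 with hαlt | hαge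
  · -- α = 1, m = 2
    have hα1' : α = 1 := by omega
    have hm2 : m = 2 := by rw [hm, hα1']; norm_num
    have hcard : Fintype.card (ZMod m) = 2 := by rw [ZMod.card, hm2]
    have hABuniv : A ∩ B = Finset.univ := by
      apply Finset.eq_univ_of_card
      rw [hI, hcard]
    have hAuniv : A = Finset.univ := by
      have h1 : A ∩ B ⊆ A := Finset.inter_subset_left
      rw [hABuniv] at h1
      exact Finset.univ_subset_iff.1 h1
    have hBuniv : B = Finset.univ := by
      have h1 : A ∩ B ⊆ B := Finset.inter_subset_right
      rw [hABuniv] at h1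
      exact Finset.univ_subset_iff.1 h1
    constructor
    · intro _
      rw [hBuniv, hAuniv]
      have hinj : Function.Injective (fun a : ZMod m => a + ((m/2:ℕ):ZMod m)) := by
        intro a b h
        simpa using h
      symm
      apply Finset.eq_univ_of_card
      rw [Finset.card_image_of_injective _ hinj, Finset.card_univ]
    · intro _ n
      rw [hAuniv, hBuniv]
  · -- α ≥ 3
    have hα3 : 3 ≤ α := by omega
    constructor
    · intro heq
      obtain ⟨c1, c2, hc, hIset⟩ := Finset.card_eq_two.1 hI
      have hrel := relations hme A B c1 c2 hc hU hIset heq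
      set H : ZMod m := ((m/2:ℕ):ZMod m) with hH
      set d : ZMod m := c2 - c1 with hd
      have hd0 : d ≠ 0 := by rw [hd]; exact sub_ne_zero.2 (Ne.symm hc)
      have hzero : ∀ x : ZMod m, gg A B (x + c1) = 0 ↔ (x = 0 ∨ x = d) := by
        intro x
        rw [(gval A B c1 c2 hc hU hIset (x + c1)).1]
        constructor
        · rintro (h | h)
          · exact Or.inl (by linear_combination h)
          · exact Or.inr (by rw [hd]; linear_combination h)
        · rintro (rfl | rfl)
          · exact Or.inl (by ring)
          · exact Or.inr (by rw [hd]; ring)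
      have hpm : ∀ x : ZMod m, gg A B (x + c1) = 0 ∨ gg A B (x + c1) = 1
          ∨ gg A B (x + c1) = -1 :=
        fun x => (gval A B c1 c2 hc hU hIset (x + c1)).2
      have hkey : d = H :=
        key α hα3 hm (fun x => gg A B (x + c1)) d hd0 hzero hpm hrel.1 hrel.2
      have hant := antiper α hm hme (fun x => gg A B (x + c1))
        (by intro k; have h := hrel.2 k; rw [hkey] at h; exact h)
      have hgg : ∀ y : ZMod m, gg A B y + gg A B (y + H) = 0 := by
        intro y
        have h := hant (y - c1)
        rw [show y - c1 + c1 = y from by ring,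
          show y - c1 + H + c1 = y + H from by ring] at h
        exact h
      have hc2 : c2 = c1 + H := by rw [← hkey, hd]; ring
      have hHH : H + H = 0 := (double_eq_zero_iff hme H).2 (Or.inr rfl)
      ext x
      rw [Finset.mem_image]
      have hiff : x ∈ B ↔ x + H ∈ A := by
        have e1 := indAB A B c1 c2 hc hU hIset x
        have e2 := indAB A B c1 c2 hc hU hIset (x + H)
        have e3 := hgg x
        unfold gg at e3
        have i1 : (x + H = c1) ↔ (x = c2) := by
          constructor <;> intro h
          · linear_combination h - hc2 - hHH
          · linear_combination h + hc2 + hHH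
        have i2 : (x + H = c2) ↔ (x = c1) := by
          constructor <;> intro h
          · linear_combination h + hc2
          · linear_combination h - hc2
        have sswap : ((if x + H = c1 then (1:ℤ) else 0) + (if x + H = c2 then (1:ℤ) else 0))
            = ((if x = c1 then (1:ℤ) else 0) + (if x = c2 then (1:ℤ) else 0)) := by
          simp only [i1, i2]
          ring
        rw [sswap] at e2
        have hind : ind A (x + H) = ind B x := by
          linarith [e1, e2, e3]
        unfold ind at hind
        by_cases h1 : x ∈ B <;> by_cases h2 : x + H ∈ A
        · exact iff_of_true h1 h2
        · rw [if_neg h2, if_pos h1] at hind; norm_num at hind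
        · rw [if_pos h2, if_neg h1] at hind; norm_num at hind
        · exact iff_of_false h1 h2
      constructor
      · intro hxB
        refine ⟨x + H, hiff.1 hxB, ?_⟩
        linear_combination hHH
      · rintro ⟨a, ha, rfl⟩
        apply hiff.2
        rw [show a + H + H = a from by linear_combination hHH]
        exact ha
    · intro hB n
      rw [hB]
      exact (easy_dir hme A n).symm
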